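/- Let (Γ, c₀, c₁, …, c_r, t) be a decorated cactus, let 1 ≤ i ≤ r, write s := N ∘ ι, and let l_i + 1 = #c_i. Fix f₀ ∈ c_i and set f_j := s^j(f₀) for 0 ≤ j ≤ l_i (so c_i = {f₀, …, f_{l_i}} and each ι(f_j) ∈ c₀). For a, b ∈ c₀ let d(a, b) be the least integer k ≥ 1 with s^k(a) = b. Then Σ_{j=0}^{l_i−1} d(ι(f_{j+1}), ι(f_j)) + d(ι(f₀), ι(f_{l_i})) = #c₀. (This expresses that ι(f₀) > ι(f₁) > ⋯ > ι(f_{l_i}) > ι(f₀) with respect to the cyclic order on the cycle c₀ defined by f < s(f).) -/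

import Mathlib

/-!
Measure first passages along `c 0` by positions modulo `n = #c 0`, so that they become
differences of positions. For `i ≠ 0`, `s` permutes `c i`, so the winding sum of `c i` (the sum in
the theorem) is a positive multiple of `n`. Globally, at each vertex the first returns of `N` to
`c 0` wind around `c 0` a positive number of times, while each edge pairs one return step with one
step of a winding sum into a total of `n + 1`. With the genus-zero relation `#V + r = #E + 1` this
bounds the winding sums of `c 1, …, c r` by `n r` in total, so each of them equals `n`.
-/

open scoped Classical

/-- A *decorated cactus* (Definition 8.1 of the paper): a connected ribbon graph `Γ`
of genus `0`, together with cycles `c 0, c 1, …, c r` (orbits of `rot ∘ inv` on the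
set of flags) whose disjoint union is the set of flags, such that every pair
`{f, inv f}` meets `c 0` in exactly one flag, and a distinguished tail `tail`.

* `V` is the (finite) set of vertices, `F` the (finite) set of flags;
* `lam : F → V` assigns to a flag its vertex, `inv` is the involution `ι`
  (whose non-fixed orbits are the edges, and whose fixed points are the tails);
* `rot : F ≃ F` is the ribbon structure `N`, preserving `lam` and acting
  transitively on every fiber of `lam`;
* connectivity is phrased via walks of edges, and genus `0` via
  `#V + #cycles = #edges + 2` (i.e. `2 - 2g = #V - #E + #cycles` with `g = 0`). -/
structure DecoratedCactus (r : ℕ) : Type 1 where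
  V : Type
  F : Type
  [finV : Fintype V]
  [finF : Fintype F]
  [decV : DecidableEq V]
  [decF : DecidableEq F]
  lam : F → V
  inv : F → F
  inv_invol : ∀ f, inv (inv f) = f
  rot : F ≃ F
  lam_rot : ∀ f, lam (rot f) = lam f
  rot_trans : ∀ f g : F, lam f = lam g → ∃ n : ℕ, (fun x => rot x)^[n] f = g
  conn : Nonempty V ∧ ∀ v w : V,
    Relation.ReflTransGen (fun a b => ∃ f, inv f ≠ f ∧ lam f = a ∧ lam (inv f) = b) v w
  genus_zero :
    Fintype.card V +
      (Finset.univ.image (fun f : F =>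
        Finset.univ.filter (fun g : F => ∃ n : ℕ, (fun x => rot (inv x))^[n] f = g))).card =
    ((Finset.univ.filter (fun f : F => inv f ≠ f)).image (fun f => s(f, inv f))).card + 2
  c : Fin (r + 1) → Set F
  c_cycle : ∀ i, ∃ f : F, c i = {g | ∃ n : ℕ, (fun x => rot (inv x))^[n] f = g}
  c_disj : ∀ i j, i ≠ j → c i ∩ c j = ∅
  c_cover : (⋃ i, c i) = (Set.univ : Set F)
  flag_c0 : ∀ f : F, ({f, inv f} ∩ c 0 : Set F).encard = 1
  tail : F
  tail_tail : inv tail = tail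

attribute [instance] DecoratedCactus.finV DecoratedCactus.finF
  DecoratedCactus.decV DecoratedCactus.decF

/-- For two flags `a, b` in the same cycle of `s = rot ∘ inv`, the first-passage
distance `d(a,b)`: the least `m ≥ 1` with `s^[m] a = b`. -/
noncomputable def DecoratedCactus.firstPassage {r : ℕ} (d : DecoratedCactus r)
    (a b : d.F) : ℕ :=
  sInf {m : ℕ | 1 ≤ m ∧ (fun x => d.rot (d.inv x))^[m] a = b}

namespace Function

variable {α : Type*} {f : α → α} {a x y : α} {m n : ℕ}

theorem iterate_eq_iterate_iff_modEq (ha : a ∈ periodicPts f) :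
    f^[m] a = f^[n] a ↔ m ≡ n [MOD minimalPeriod f a] := by
  have hp := minimalPeriod_pos_of_mem_periodicPts ha
  rw [← iterate_mod_minimalPeriod_eq (n := m), ← iterate_mod_minimalPeriod_eq (n := n)]
  exact iterate_eq_iterate_iff_of_lt_minimalPeriod (Nat.mod_lt _ hp) (Nat.mod_lt _ hp)

theorem exists_pos_iterate_eq (ha : a ∈ periodicPts f) (hx : ∃ i, f^[i] a = x)
    (hy : ∃ j, f^[j] a = y) : ∃ k, 1 ≤ k ∧ f^[k] x = y := by
  obtain ⟨i, rfl⟩ := hx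
  obtain ⟨j, rfl⟩ := hy
  have hp := minimalPeriod_pos_of_mem_periodicPts ha
  have hi : i + 1 ≤ minimalPeriod f a * (i + 1) := Nat.le_mul_of_pos_left _ hp
  refine ⟨j + minimalPeriod f a * (i + 1) - i, by omega, ?_⟩
  rw [← iterate_add_apply, iterate_eq_iterate_iff_modEq ha, Nat.sub_add_cancel (by omega)]
  exact Nat.add_mul_mod_self_left _ _ _

theorem range_iterate_eq_of_mem (ha : a ∈ periodicPts f) (hx : ∃ i, f^[i] a = x) :
    Set.range (f^[·] x) = Set.range (f^[·] a) := by
  ext y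
  constructor
  · rintro ⟨k, rfl⟩
    obtain ⟨i, rfl⟩ := hx
    exact ⟨k + i, iterate_add_apply f k i a⟩
  · rintro ⟨j, rfl⟩
    obtain ⟨k, -, hk⟩ := exists_pos_iterate_eq ha hx ⟨j, rfl⟩
    exact ⟨k, hk⟩

theorem coe_image_range_minimalPeriod [DecidableEq α] (ha : a ∈ periodicPts f) :
    ((Finset.range (minimalPeriod f a)).image (f^[·] a) : Set α) = Set.range (f^[·] a) := by
  ext y
  simp only [Finset.coe_image, Finset.coe_range, Set.mem_image, Set.mem_Iio, Set.mem_range]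
  refine ⟨fun ⟨k, _, hk⟩ => ⟨k, hk⟩, fun ⟨k, hk⟩ => ?_⟩
  exact ⟨k % minimalPeriod f a, Nat.mod_lt _ (minimalPeriod_pos_of_mem_periodicPts ha),
    by rw [iterate_mod_minimalPeriod_eq, hk]⟩

/-- `0` when no `m ≥ 1` has `f^[m] a = b`. -/
noncomputable def firstPassage (f : α → α) (a b : α) : ℕ :=
  sInf {m | 1 ≤ m ∧ f^[m] a = b}

theorem firstPassage_apply_self : firstPassage f a (f a) = 1 :=
  le_antisymm (Nat.sInf_le ⟨le_rfl, rfl⟩) (le_csInf ⟨1, le_rfl, rfl⟩ fun _ hm => hm.1)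

theorem firstPassage_spec (ha : a ∈ periodicPts f) (hx : ∃ i, f^[i] a = x)
    (hy : ∃ j, f^[j] a = y) : 1 ≤ firstPassage f x y ∧ f^[firstPassage f x y] x = y :=
  Nat.sInf_mem (exists_pos_iterate_eq ha hx hy)

theorem firstPassage_le_minimalPeriod (ha : a ∈ periodicPts f) (hx : ∃ i, f^[i] a = x)
    (hy : ∃ j, f^[j] a = y) : firstPassage f x y ≤ minimalPeriod f a := by
  obtain ⟨h1, hxy⟩ := firstPassage_spec ha hx hy
  by_contra! hlt
  obtain ⟨i, rfl⟩ := hx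
  have hfix : f^[minimalPeriod f a] (f^[i] a) = f^[i] a :=
    (isPeriodicPt_minimalPeriod f a).apply_iterate i
  rw [← Nat.sub_add_cancel hlt.le, iterate_add_apply, hfix] at hxy
  have hle : firstPassage f (f^[i] a) y ≤ _ := Nat.sInf_le ⟨by omega, hxy⟩
  have := minimalPeriod_pos_of_mem_periodicPts ha
  omega

theorem natCast_firstPassage_iterate (ha : a ∈ periodicPts f) (i j : ℕ) :
    (firstPassage f (f^[i] a) (f^[j] a) : ZMod (minimalPeriod f a)) = j - i := by
  obtain ⟨-, h⟩ := firstPassage_spec ha ⟨i, rfl⟩ ⟨j, rfl⟩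
  rw [← iterate_add_apply, iterate_eq_iterate_iff_modEq ha, ← ZMod.natCast_eq_natCast_iff] at h
  rw [eq_sub_iff_add_eq, ← Nat.cast_add, h]

theorem natCast_firstPassage (ha : a ∈ periodicPts f) (hx : ∃ i, f^[i] a = x)
    (hy : ∃ j, f^[j] a = y) :
    (firstPassage f x y : ZMod (minimalPeriod f a)) = firstPassage f a y - firstPassage f a x := by
  obtain ⟨i, rfl⟩ := hx
  obtain ⟨j, rfl⟩ := hy
  have base (k : ℕ) : (firstPassage f a (f^[k] a) : ZMod (minimalPeriod f a)) = k := by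
    simpa using natCast_firstPassage_iterate ha 0 k
  rw [natCast_firstPassage_iterate ha, base, base]

/-- Both passages lie in `[1, minimalPeriod f a]` and add up to `1` modulo it. -/
theorem firstPassage_apply_add_firstPassage (ha : a ∈ periodicPts f) (hx : ∃ i, f^[i] a = x)
    (hy : ∃ j, f^[j] a = y) :
    firstPassage f x (f y) + firstPassage f y x = minimalPeriod f a + 1 := by
  have hfy : ∃ j, f^[j] a = f y := by
    obtain ⟨j, rfl⟩ := hy
    exact ⟨j + 1, iterate_succ_apply' f j a⟩
  have hmod :
      ((firstPassage f x (f y) + firstPassage f y x : ℕ) : ZMod (minimalPeriod f a)) = 1 := by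
    obtain ⟨i, rfl⟩ := hx
    obtain ⟨j, rfl⟩ := hy
    rw [Nat.cast_add, ← iterate_succ_apply' f j a, natCast_firstPassage_iterate ha,
      natCast_firstPassage_iterate ha]
    push_cast
    ring
  obtain ⟨hu, -⟩ := firstPassage_spec ha hx hfy
  obtain ⟨hv, -⟩ := firstPassage_spec ha hy hx
  have hu' := firstPassage_le_minimalPeriod ha hx hfy
  have hv' := firstPassage_le_minimalPeriod ha hy hx
  rw [← Nat.cast_one, ZMod.natCast_eq_natCast_iff] at hmod
  obtain ⟨q, hq⟩ := (Nat.modEq_iff_dvd' (by omega)).mp hmod.symm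
  rcases q with _ | _ | q
  · omega
  · omega
  · have : minimalPeriod f a * (q + 1 + 1) = minimalPeriod f a * q + 2 * minimalPeriod f a := by
      ring
    omega

theorem minimalPeriod_le_sum_firstPassage {β : Type*} (ha : a ∈ periodicPts f) {B : Finset β}
    (hB : B.Nonempty) {g h : β → α} {π : β → β} (hg : ∀ x ∈ B, ∃ i, f^[i] a = g x)
    (hπ : Set.BijOn π B B) (hgh : ∀ x ∈ B, g (π x) = h x) :
    minimalPeriod f a ≤ ∑ x ∈ B, firstPassage f (g x) (h x) := by
  have hh : ∀ x ∈ B, ∃ i, f^[i] a = h x := fun x hx => hgh x hx ▸ hg _ (hπ.mapsTo hx)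
  have hdvd : minimalPeriod f a ∣ ∑ x ∈ B, firstPassage f (g x) (h x) := by
    rw [← ZMod.natCast_eq_zero_iff, Nat.cast_sum,
      Finset.sum_congr rfl fun x hx => natCast_firstPassage ha (hg x hx) (hh x hx),
      Finset.sum_sub_distrib, sub_eq_zero]
    exact Finset.sum_nbij π hπ.mapsTo hπ.injOn hπ.surjOn fun x hx => by rw [hgh x hx]
  refine Nat.le_of_dvd (Finset.sum_pos (fun x hx => ?_) hB) hdvd
  exact (firstPassage_spec ha (hg x hx) (hh x hx)).1

end Function

namespace DecoratedCactus

open Function Finset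

variable {r : ℕ} (d : DecoratedCactus r)

def s : Equiv.Perm d.F := (Involutive.toPerm d.inv d.inv_invol).trans d.rot

theorem coe_s : ⇑d.s = fun x => d.rot (d.inv x) := rfl

theorem firstPassage_eq : d.firstPassage = Function.firstPassage d.s := rfl

theorem rot_eq_s_inv (f : d.F) : d.rot f = d.s (d.inv f) := by
  simp [coe_s, d.inv_invol]

theorem mem_periodicPts (f : d.F) : f ∈ periodicPts d.s :=
  d.s.injective.mem_periodicPts f

variable {d}

theorem c_eq_range {i : Fin (r + 1)} {f : d.F} (hf : f ∈ d.c i) :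
    d.c i = Set.range (d.s^[·] f) := by
  obtain ⟨f₀, hc⟩ := d.c_cycle i
  rw [hc] at hf ⊢
  exact (range_iterate_eq_of_mem (d.mem_periodicPts f₀) hf).symm

theorem mem_c_iff {i : Fin (r + 1)} {f g : d.F} (hf : f ∈ d.c i) :
    g ∈ d.c i ↔ ∃ k, d.s^[k] f = g := by
  rw [c_eq_range hf, Set.mem_range]

theorem eq_of_mem_c {i j : Fin (r + 1)} {f : d.F} (hi : f ∈ d.c i) (hj : f ∈ d.c j) : i = j := by
  by_contra hij
  have hf : f ∈ d.c i ∩ d.c j := ⟨hi, hj⟩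
  rwa [d.c_disj i j hij] at hf

theorem exists_mem_c (f : d.F) : ∃ i, f ∈ d.c i :=
  Set.mem_iUnion.mp (d.c_cover ▸ Set.mem_univ f)

theorem c_nonempty (i : Fin (r + 1)) : (d.c i).Nonempty := by
  obtain ⟨f, hc⟩ := d.c_cycle i
  exact ⟨f, hc ▸ ⟨0, rfl⟩⟩

theorem s_mem_c_iff {i : Fin (r + 1)} {f : d.F} : d.s f ∈ d.c i ↔ f ∈ d.c i := by
  refine ⟨fun h => ?_, fun h => (mem_c_iff h).mpr ⟨1, rfl⟩⟩
  obtain ⟨j, hj⟩ := exists_mem_c f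
  rwa [eq_of_mem_c h ((mem_c_iff hj).mpr ⟨1, rfl⟩)]

theorem toFinset_c {i : Fin (r + 1)} {f : d.F} (hf : f ∈ d.c i) :
    (d.c i).toFinset = (range (minimalPeriod d.s f)).image (d.s^[·] f) := by
  rw [← Finset.coe_inj, Set.coe_toFinset, coe_image_range_minimalPeriod (d.mem_periodicPts f),
    c_eq_range hf]

theorem ncard_c {i : Fin (r + 1)} {f : d.F} (hf : f ∈ d.c i) :
    (d.c i).ncard = minimalPeriod d.s f := by
  rw [Set.ncard_eq_toFinset_card', toFinset_c hf, card_image_of_injOn, card_range]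
  simpa only [coe_range] using iterate_injOn_Iio_minimalPeriod

theorem bijOn_s_c (i : Fin (r + 1)) : Set.BijOn d.s (d.c i) (d.c i) :=
  ((d.c i).toFinite.injOn_iff_bijOn_of_mapsTo fun _ => s_mem_c_iff.mpr).mp d.s.injective.injOn

theorem mem_c_zero_of_inv_eq_self {f : d.F} (h : d.inv f = f) : f ∈ d.c 0 := by
  obtain ⟨x, hx⟩ := Set.encard_eq_one.mp (d.flag_c0 f)
  have hf := Set.ext_iff.mp hx f
  have hx' := Set.ext_iff.mp hx x
  simp only [h, Set.mem_inter_iff, Set.mem_insert_iff, Set.mem_singleton_iff, or_self] at hf hx'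
  grind

theorem inv_mem_c_zero_iff {f : d.F} (h : d.inv f ≠ f) : d.inv f ∈ d.c 0 ↔ f ∉ d.c 0 := by
  obtain ⟨x, hx⟩ := Set.encard_eq_one.mp (d.flag_c0 f)
  have hf := Set.ext_iff.mp hx f
  have hf' := Set.ext_iff.mp hx (d.inv f)
  have hx' := Set.ext_iff.mp hx x
  simp only [Set.mem_inter_iff, Set.mem_insert_iff, Set.mem_singleton_iff] at hf hf' hx'
  grind

theorem inv_mem_c_zero {f : d.F} (hf : f ∉ d.c 0) : d.inv f ∈ d.c 0 := by
  by_cases h : d.inv f = f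
  · exact absurd (mem_c_zero_of_inv_eq_self h) hf
  · exact (inv_mem_c_zero_iff h).mpr hf

theorem rot_notMem_c_zero {f : d.F} (hf : f ∈ d.c 0) (h : d.inv f ≠ f) : d.rot f ∉ d.c 0 := by
  rw [rot_eq_s_inv, s_mem_c_iff, inv_mem_c_zero_iff h]
  exact not_not.mpr hf

theorem filter_iterate_eq_toFinset {i : Fin (r + 1)} {f : d.F} (hf : f ∈ d.c i) :
    (univ.filter fun g => ∃ n : ℕ, (fun x => d.rot (d.inv x))^[n] f = g) = (d.c i).toFinset := by
  ext g
  simp only [mem_filter, mem_univ, true_and, Set.mem_toFinset]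
  exact (mem_c_iff hf).symm

theorem card_cycles :
    (univ.image fun f : d.F =>
      univ.filter fun g : d.F => ∃ n : ℕ, (fun x => d.rot (d.inv x))^[n] f = g).card = r + 1 := by
  have himage : (univ.image fun f : d.F =>
      univ.filter fun g : d.F => ∃ n : ℕ, (fun x => d.rot (d.inv x))^[n] f = g) =
      univ.image fun i => (d.c i).toFinset := by
    ext A
    simp only [mem_image, mem_univ, true_and]
    constructor
    · rintro ⟨f, rfl⟩
      obtain ⟨i, hf⟩ := exists_mem_c f
      exact ⟨i, (filter_iterate_eq_toFinset hf).symm⟩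
    · rintro ⟨i, rfl⟩
      obtain ⟨f, hf⟩ := c_nonempty (d := d) i
      exact ⟨f, filter_iterate_eq_toFinset hf⟩
  rw [himage, card_image_of_injective, card_univ, Fintype.card_fin]
  intro i j hij
  obtain ⟨f, hf⟩ := c_nonempty (d := d) i
  exact eq_of_mem_c hf (Set.toFinset_inj.mp hij ▸ hf)

theorem card_edges :
    ((univ.filter fun f : d.F => d.inv f ≠ f).image fun f => s(f, d.inv f)).card =
      (univ.filter (· ∉ d.c 0)).card := by
  symm
  refine card_bij (fun x _ => s(x, d.inv x)) (fun x hx => ?_) (fun x hx y hy hxy => ?_) ?_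
  · simp only [mem_filter, mem_univ, true_and] at hx
    exact mem_image_of_mem _ (by simpa using fun h => hx (mem_c_zero_of_inv_eq_self h))
  · simp only [mem_filter, mem_univ, true_and] at hx hy
    rcases Sym2.eq_iff.mp hxy with ⟨rfl, -⟩ | ⟨-, rfl⟩
    · rfl
    · exact absurd (inv_mem_c_zero hx) hy
  · simp only [mem_image, mem_filter, mem_univ, true_and, exists_prop]
    rintro _ ⟨f, hf, rfl⟩
    by_cases h0 : f ∈ d.c 0
    · refine ⟨d.inv f, fun h => (inv_mem_c_zero_iff hf).mp h h0, ?_⟩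
      rw [d.inv_invol, Sym2.eq_swap]
    · exact ⟨f, h0, rfl⟩

theorem card_V_add_r : Fintype.card d.V + r = (univ.filter (· ∉ d.c 0)).card + 1 := by
  have := d.genus_zero
  rw [card_cycles, card_edges] at this
  omega

theorem sum_toFinset_c_zero {M : Type*} [AddCommMonoid M] (φ : d.F → M) :
    ∑ y ∈ (d.c 0).toFinset, φ y =
      ∑ y ∈ (d.c 0).toFinset with d.inv y = y, φ y +
        ∑ x ∈ univ.filter (· ∉ d.c 0), φ (d.inv x) := by
  rw [← sum_filter_add_sum_filter_not _ (fun y => d.inv y = y)]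
  congr 1
  refine sum_nbij' d.inv d.inv (fun y hy => ?_) (fun x hx => ?_) (fun y _ => d.inv_invol y)
    (fun x _ => d.inv_invol x) (fun y _ => by rw [d.inv_invol])
  · simp only [mem_filter, Set.mem_toFinset, mem_univ, true_and] at hy ⊢
    exact (inv_mem_c_zero_iff hy.2).not_left.mpr hy.1
  · simp only [mem_filter, Set.mem_toFinset, mem_univ, true_and] at hx ⊢
    refine ⟨inv_mem_c_zero hx, fun h => hx ?_⟩
    rw [d.inv_invol] at h
    exact h ▸ inv_mem_c_zero hx

variable (d) in
/-- The first return of `N` to `c 0`: for a half-edge `y` of `c 0`, `N y` lies on the cycle of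
`ι y`, which is not `c 0`. -/
def firstReturn (y : d.F) : d.F := if d.inv y = y then d.rot y else d.rot (d.rot y)

theorem firstReturn_of_inv_eq_self {y : d.F} (h : d.inv y = y) : d.firstReturn y = d.s y := by
  rw [firstReturn, if_pos h, rot_eq_s_inv, h]

theorem firstReturn_inv {x : d.F} (hx : x ∉ d.c 0) :
    d.firstReturn (d.inv x) = d.s (d.inv (d.s x)) := by
  have hne : d.inv (d.inv x) ≠ d.inv x := by
    rw [d.inv_invol]
    exact fun h => hx (h ▸ inv_mem_c_zero hx)
  rw [firstReturn, if_neg hne, d.rot_eq_s_inv (d.inv x), d.inv_invol, d.rot_eq_s_inv]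

theorem lam_firstReturn (y : d.F) : d.lam (d.firstReturn y) = d.lam y := by
  unfold firstReturn
  split_ifs <;> simp only [d.lam_rot]

theorem firstReturn_mem {y : d.F} (hy : y ∈ d.c 0) : d.firstReturn y ∈ d.c 0 := by
  by_cases h : d.inv y = y
  · rwa [firstReturn_of_inv_eq_self h, s_mem_c_iff]
  · rw [firstReturn, if_neg h, d.rot_eq_s_inv (d.rot y), s_mem_c_iff]
    exact inv_mem_c_zero (rot_notMem_c_zero hy h)

theorem injOn_firstReturn : Set.InjOn d.firstReturn (d.c 0) := by
  intro y hy z hz hyz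
  simp only [firstReturn] at hyz
  split_ifs at hyz with h₁ h₂ h₂
  · exact d.rot.injective hyz
  · exact absurd (d.rot.injective hyz ▸ hy) (rot_notMem_c_zero hz h₂)
  · exact absurd (d.rot.injective hyz ▸ hz) (rot_notMem_c_zero hy h₁)
  · exact d.rot.injective (d.rot.injective hyz)

theorem exists_mem_c_zero_lam_eq (v : d.V) : ∃ y ∈ d.c 0, d.lam y = v := by
  obtain ⟨f, hf⟩ : ∃ f, d.lam f = v := by
    rcases (d.conn.2 v (d.lam d.tail)).cases_head with h | ⟨_, ⟨f, -, hf, -⟩, -⟩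
    · exact ⟨d.tail, h.symm⟩
    · exact ⟨f, hf⟩
  by_cases h0 : f ∈ d.c 0
  · exact ⟨f, h0, hf⟩
  · refine ⟨d.rot f, ?_, by rw [d.lam_rot, hf]⟩
    rw [rot_eq_s_inv, s_mem_c_iff]
    exact inv_mem_c_zero h0

theorem ncard_c_zero_le_sum_lam_eq (v : d.V) :
    (d.c 0).ncard ≤
      ∑ y ∈ (d.c 0).toFinset with d.lam y = v, d.firstPassage y (d.firstReturn y) := by
  set B := ((d.c 0).toFinset.filter fun y => d.lam y = v) with hB
  have hmem {y : d.F} : y ∈ B ↔ y ∈ d.c 0 ∧ d.lam y = v := by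
    rw [hB, mem_filter, Set.mem_toFinset]
  obtain ⟨y₀, hy₀, hlam⟩ := exists_mem_c_zero_lam_eq (d := d) v
  have hmaps : Set.MapsTo d.firstReturn B B := fun y hy =>
    hmem.mpr ⟨firstReturn_mem (hmem.mp hy).1, (lam_firstReturn y).trans (hmem.mp hy).2⟩
  have hbij : Set.BijOn d.firstReturn B B := (B.finite_toSet.injOn_iff_bijOn_of_mapsTo hmaps).mp
    (injOn_firstReturn.mono fun y hy => (hmem.mp hy).1)
  rw [ncard_c hy₀, firstPassage_eq]
  exact minimalPeriod_le_sum_firstPassage (d.mem_periodicPts y₀) ⟨y₀, hmem.mpr ⟨hy₀, hlam⟩⟩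
    (fun y hy => (mem_c_iff hy₀).mp (hmem.mp hy).1) hbij fun _ _ => rfl

theorem notMem_c_zero {i : Fin (r + 1)} (hi : i ≠ 0) {x : d.F} (hx : x ∈ d.c i) : x ∉ d.c 0 :=
  fun h => hi (eq_of_mem_c hx h)

theorem firstPassage_firstReturn_inv_add {x : d.F} (hx : x ∉ d.c 0) :
    d.firstPassage (d.inv x) (d.firstReturn (d.inv x)) +
      d.firstPassage (d.inv (d.s x)) (d.inv x) = (d.c 0).ncard + 1 := by
  have ha := inv_mem_c_zero hx
  have hb := inv_mem_c_zero (mt s_mem_c_iff.mp hx)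
  rw [firstReturn_inv hx, ncard_c ha, firstPassage_eq]
  exact firstPassage_apply_add_firstPassage (d.mem_periodicPts _) ⟨0, rfl⟩ ((mem_c_iff ha).mp hb)

/-- Tails contribute `1` each, and each flag off `c 0` contributes `#c 0 + 1` through the pair of
passages of `firstPassage_firstReturn_inv_add`; the total is rewritten by the genus formula. -/
theorem sum_firstReturn_add_sum_notMem :
    ∑ y ∈ (d.c 0).toFinset, d.firstPassage y (d.firstReturn y) +
      ∑ x ∈ univ.filter (· ∉ d.c 0), d.firstPassage (d.inv (d.s x)) (d.inv x) =
    (d.c 0).ncard * (Fintype.card d.V + r) := by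
  have htails : ∑ y ∈ (d.c 0).toFinset with d.inv y = y, d.firstPassage y (d.firstReturn y) =
      ((d.c 0).toFinset.filter fun y => d.inv y = y).card := by
    rw [card_eq_sum_ones]
    refine sum_congr rfl fun y hy => ?_
    rw [firstReturn_of_inv_eq_self (mem_filter.mp hy).2, firstPassage_eq, firstPassage_apply_self]
  have hpairs : ∑ x ∈ univ.filter (· ∉ d.c 0), (d.firstPassage (d.inv x) (d.firstReturn (d.inv x)) +
      d.firstPassage (d.inv (d.s x)) (d.inv x)) =
      (univ.filter (· ∉ d.c 0)).card * ((d.c 0).ncard + 1) := by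
    rw [sum_congr rfl fun x hx => firstPassage_firstReturn_inv_add (mem_filter.mp hx).2, sum_const,
      smul_eq_mul]
  have hn : (d.c 0).ncard =
      ((d.c 0).toFinset.filter fun y => d.inv y = y).card + (univ.filter (· ∉ d.c 0)).card := by
    rw [Set.ncard_eq_toFinset_card', card_eq_sum_ones, sum_toFinset_c_zero, ← card_eq_sum_ones,
      ← card_eq_sum_ones]
  rw [sum_toFinset_c_zero, htails, add_assoc, ← sum_add_distrib, hpairs, card_V_add_r, hn]
  ring

theorem sum_notMem_le :
    ∑ x ∈ univ.filter (· ∉ d.c 0), d.firstPassage (d.inv (d.s x)) (d.inv x) ≤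
      (d.c 0).ncard * r := by
  have hV : (d.c 0).ncard * Fintype.card d.V ≤
      ∑ y ∈ (d.c 0).toFinset, d.firstPassage y (d.firstReturn y) := by
    rw [← sum_fiberwise _ d.lam, mul_comm, ← smul_eq_mul, ← card_univ, ← sum_const]
    exact sum_le_sum fun v _ => ncard_c_zero_le_sum_lam_eq v
  have := sum_firstReturn_add_sum_notMem (d := d)
  rw [mul_add] at this
  omega

variable (d) in
noncomputable def windingSum (i : Fin (r + 1)) : ℕ :=
  ∑ x ∈ (d.c i).toFinset, d.firstPassage (d.inv (d.s x)) (d.inv x)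

theorem windingSum_eq_sum_range {i : Fin (r + 1)} {f : d.F} (hf : f ∈ d.c i) :
    d.windingSum i = ∑ j ∈ range (minimalPeriod d.s f),
      d.firstPassage (d.inv (d.s (d.s^[j] f))) (d.inv (d.s^[j] f)) := by
  rw [windingSum, toFinset_c hf, sum_image fun j hj k hk =>
    iterate_injOn_Iio_minimalPeriod (by simpa using hj) (by simpa using hk)]

/-- `s` permutes `c i`, so the sum is a positive multiple of `#c 0`. -/
theorem ncard_c_zero_le_windingSum {i : Fin (r + 1)} (hi : i ≠ 0) :
    (d.c 0).ncard ≤ d.windingSum i := by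
  obtain ⟨f, hf⟩ := c_nonempty (d := d) i
  have ha := inv_mem_c_zero (notMem_c_zero hi hf)
  have hbij : Set.BijOn d.s.symm ↑(d.c i).toFinset ↑(d.c i).toFinset := by
    rw [Set.coe_toFinset]
    exact (bijOn_s_c i).equiv_symm
  rw [ncard_c ha, windingSum, firstPassage_eq]
  refine minimalPeriod_le_sum_firstPassage (d.mem_periodicPts _) ⟨f, Set.mem_toFinset.mpr hf⟩
    (fun x hx => (mem_c_iff ha).mp ?_) hbij fun x _ => by simp
  exact inv_mem_c_zero (notMem_c_zero hi (s_mem_c_iff.mpr (Set.mem_toFinset.mp hx)))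

theorem sum_windingSum :
    ∑ i ∈ univ.erase 0, d.windingSum i =
      ∑ x ∈ univ.filter (· ∉ d.c 0), d.firstPassage (d.inv (d.s x)) (d.inv x) := by
  have hunion : (univ.erase 0).biUnion (fun i => (d.c i).toFinset) = univ.filter (· ∉ d.c 0) := by
    ext x
    simp only [mem_biUnion, mem_erase, mem_univ, and_true, Set.mem_toFinset, mem_filter,
      true_and]
    refine ⟨fun ⟨i, hi, hx⟩ => notMem_c_zero hi hx, fun hx => ?_⟩
    obtain ⟨i, hi⟩ := exists_mem_c x
    exact ⟨i, fun h => hx (h ▸ hi), hi⟩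
  rw [← hunion, sum_biUnion fun i _ j _ hij =>
    Set.disjoint_toFinset.mpr (Set.disjoint_iff_inter_eq_empty.mpr (d.c_disj i j hij))]
  rfl

theorem windingSum_eq {i : Fin (r + 1)} (hi : i ≠ 0) : d.windingSum i = (d.c 0).ncard := by
  have hle : ∑ j ∈ univ.erase 0, d.windingSum j ≤
      ∑ _j ∈ univ.erase (0 : Fin (r + 1)), (d.c 0).ncard := by
    rw [sum_windingSum, sum_const, card_erase_of_mem (mem_univ _), card_univ, Fintype.card_fin,
      smul_eq_mul, Nat.add_sub_cancel, mul_comm]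
    exact sum_notMem_le
  have hge (j) (hj : j ∈ univ.erase 0) : (d.c 0).ncard ≤ d.windingSum j :=
    ncard_c_zero_le_windingSum (ne_of_mem_erase hj)
  exact ((sum_eq_sum_iff_of_le hge).mp ((sum_le_sum hge).antisymm hle) i
    (mem_erase.mpr ⟨hi, mem_univ i⟩)).symm

end DecoratedCactus

/-- Lemma 8.4.  Let `c i` (`i ≠ 0`) be a cycle with `l + 1` flags,
`f₀ ∈ c i` and `f_j := (N∘ι)^j f₀`.  Then, with respect to the cyclic order of `c 0`,
`ι f₀ > ι f₁ > ⋯ > ι f_l > ι f₀`; i.e. the first-passage distances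
`d(ι f_{j+1}, ι f_j)` (`0 ≤ j < l`) together with `d(ι f₀, ι f_l)` add up to `# c 0`. -/
theorem DecoratedCactus.sum_firstPassage {r : ℕ} (d : DecoratedCactus r)
    (i : Fin (r + 1)) (hi : i ≠ 0) (f₀ : d.F) (hf₀ : f₀ ∈ d.c i)
    (l : ℕ) (hl : (d.c i).ncard = l + 1) :
    (∑ j ∈ Finset.range l,
        d.firstPassage (d.inv ((fun x => d.rot (d.inv x))^[j + 1] f₀))
          (d.inv ((fun x => d.rot (d.inv x))^[j] f₀)))
      + d.firstPassage (d.inv f₀) (d.inv ((fun x => d.rot (d.inv x))^[l] f₀))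
    = (d.c 0).ncard := by
  have hper : Function.minimalPeriod d.s f₀ = l + 1 := by rw [← ncard_c hf₀, hl]
  have hlast : d.s (d.s^[l] f₀) = f₀ := by
    simpa only [hper, Function.iterate_succ_apply'] using
      Function.iterate_minimalPeriod (f := d.s) (x := f₀)
  rw [← d.coe_s, ← windingSum_eq hi, windingSum_eq_sum_range hf₀, hper, Finset.sum_range_succ,
    hlast]
  simp only [Function.iterate_succ_apply']
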